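/- Let K be a locally small (possibly large) category and C a small category. A functor S : K → [C, Set] into the functor category is small (i.e., it is the left Kan extension of its restriction to some small full subcategory of K) if and only if it is pointwise small, meaning that for every object c of C the composite ev_c ∘ S : K → Set of S with the evaluation functor at c is a small functor. -/

import Mathlib

open CategoryTheory CategoryTheory.Limits Opposite

universe w v v' u u'

/-- A functor `S : K ⥤ M` is (`w`-)small if it is the left Kan extension of its
restriction to some small full subcategory of `K`. -/
def IsSmallFunctor {K : Type u} [Category.{v} K] {M : Type u'} [Category.{v'} M]
    (S : K ⥤ M) : Prop :=
  ∃ P : K → Prop, Small.{w} (Subtype P) ∧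
    S.IsLeftKanExtension (𝟙 (ObjectProperty.ι P ⋙ S))

/-- Representable presheaves are small. -/
theorem isSmallFunctor_yoneda_obj {K : Type u} [Category.{v} K] (A : K) :
    IsSmallFunctor.{w} (yoneda.obj A) := by
  refine ⟨fun X => X = op A, ?_, ?_⟩
  · have : Subsingleton {X : Kᵒᵖ // X = op A} :=
      ⟨fun X Y => Subtype.ext (X.2.trans Y.2.symm)⟩
    infer_instance
  · set P : Kᵒᵖ → Prop := fun X => X = op A with hP
    set ι := ObjectProperty.ι P with hι
    constructor
    refine ⟨IsInitial.ofUniqueHom (fun E => StructuredArrow.homMk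
      (yonedaEquiv.symm (E.hom.app ⟨op A, rfl⟩ (𝟙 A))) ?_) ?_⟩
    · ext X f
      have hnat := ConcreteCategory.congr_hom (E.hom.naturality
        (show (⟨op A, rfl⟩ : ObjectProperty.FullSubcategory P) ⟶ X from ObjectProperty.homMk f.op)) (𝟙 A)
      simp [ι] at hnat
      refine Eq.trans ?_ hnat.symm
      rfl
    · intro E m
      apply StructuredArrow.hom_ext
      ext Y g
      have hx := ConcreteCategory.congr_hom (NatTrans.congr_app m.w ⟨op A, rfl⟩) (𝟙 A)
      have hnat := NatTrans.naturality_apply m.right (Quiver.Hom.op g : op A ⟶ Y) (𝟙 A)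
      have hx' : m.right.app (op A) (𝟙 A) = E.hom.app ⟨op A, rfl⟩ (𝟙 A) := by
        rw [← hx]; rfl
      show m.right.app Y g = E.right.map g.op (E.hom.app ⟨op A, rfl⟩ (𝟙 A))
      rw [← hx', ← hnat]
      congr 1
      exact (Category.comp_id g).symm

/-- The category of small presheaves on `K`. -/
abbrev SmallPresheaf (K : Type u) [Category.{v} K] : Type (max u (v + 1)) :=
  ObjectProperty.FullSubcategory (fun F : Kᵒᵖ ⥤ Type v => IsSmallFunctor.{v} F)

/-- The Yoneda embedding of `K` into its category of small presheaves. -/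
def smallYoneda (K : Type u) [Category.{v} K] : K ⥤ SmallPresheaf K where
  obj A := ⟨yoneda.obj A, isSmallFunctor_yoneda_obj A⟩
  map f := ObjectProperty.homMk (yoneda.map f)

/-- `L` is a limit of `S : C ⥤ A` weighted by `φ : C ⥤ Type v`, i.e. morphisms `a ⟶ L`
correspond, naturally in `a`, to natural transformations `φ ⟶ A(a, S-)`. -/
def IsWeightedLimit {C : Type u} [Category.{v} C] {A : Type u'} [Category.{v'} A]
    (φ : C ⥤ Type v) (S : C ⥤ A) (L : A) : Prop :=
  ∃ e : ∀ a : A, (a ⟶ L) ≃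
      ((φ ⋙ uliftFunctor.{v'}) ⟶ (S ⋙ coyoneda.obj (op a) ⋙ uliftFunctor.{v})),
    ∀ (a a' : A) (f : a' ⟶ a) (g : a ⟶ L) (c : C) (x : φ.obj c),
      (e a' (f ≫ g)).app c ⟨x⟩ = ⟨f ≫ ((e a g).app c ⟨x⟩).down⟩

/-- `L` is a colimit of `T : Cᵒᵖ ⥤ A` weighted by `φ : C ⥤ Type v`, i.e. morphisms `L ⟶ a`
correspond, naturally in `a`, to natural transformations `φ ⟶ A(T-, a)`. -/
def IsWeightedColimit {C : Type u} [Category.{v} C] {A : Type u'} [Category.{v'} A]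
    (φ : C ⥤ Type v) (T : Cᵒᵖ ⥤ A) (L : A) : Prop :=
  ∃ e : ∀ a : A, (L ⟶ a) ≃
      ((φ ⋙ uliftFunctor.{v'}) ⟶ (T.rightOp ⋙ yoneda.obj a ⋙ uliftFunctor.{v})),
    ∀ (a a' : A) (f : a ⟶ a') (g : L ⟶ a) (c : C) (x : φ.obj c),
      (e a' (g ≫ f)).app c ⟨x⟩ = ⟨((e a g).app c ⟨x⟩).down ≫ f⟩

/-- A class of weights with small domains. -/
def WeightClass : Type (v + 1) :=
  ∀ C : Cat.{v, v}, (C ⥤ Type v) → Prop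

/-- A category is `Φ`-complete if it has all `φ`-weighted limits for `φ ∈ Φ`. -/
def PhiComplete (Φ : WeightClass.{v}) (A : Type u) [Category.{v'} A] : Prop :=
  ∀ (C : Cat.{v, v}) (φ : C ⥤ Type v), Φ C φ →
    ∀ S : C ⥤ A, ∃ L : A, IsWeightedLimit φ S L

/-- A category is `Φ`-cocomplete if it has all `φ`-weighted colimits for `φ ∈ Φ`. -/
def PhiCocomplete (Φ : WeightClass.{v}) (A : Type u) [Category.{v'} A] : Prop :=
  ∀ (C : Cat.{v, v}) (φ : C ⥤ Type v), Φ C φ →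
    ∀ T : Cᵒᵖ ⥤ A, ∃ L : A, IsWeightedColimit φ T L

/-- A functor is `Φ`-continuous if it preserves all `φ`-weighted limits for `φ ∈ Φ`. -/
def PhiContinuous (Φ : WeightClass.{v}) {A : Type u} [Category.{v'} A]
    {B : Type u'} [Category.{w} B] (F : A ⥤ B) : Prop :=
  ∀ (C : Cat.{v, v}) (φ : C ⥤ Type v), Φ C φ →
    ∀ (S : C ⥤ A) (L : A), IsWeightedLimit φ S L → IsWeightedLimit φ (S ⋙ F) (F.obj L)

/-- The closure of a collection `P` of objects of `A` under `Φ`-weighted colimits. -/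
inductive PhiClosure (Φ : WeightClass.{v}) {A : Type u} [Category.{v'} A]
    (P : A → Prop) : A → Prop
  | base {X : A} (hX : P X) : PhiClosure Φ P X
  | colim {C : Cat.{v, v}} (φ : C ⥤ Type v) (hφ : Φ C φ) (T : Cᵒᵖ ⥤ A)
      (hT : ∀ c : Cᵒᵖ, PhiClosure Φ P (T.obj c)) {L : A}
      (hL : IsWeightedColimit φ T L) : PhiClosure Φ P L

/-- The smallness condition on a class of weights: for every small `C`, the closure of the
representables in the presheaf category of `C` under `Φ`-weighted colimits is small. -/
def SmallnessCondition (Φ : WeightClass.{v}) : Prop :=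
  ∀ C : Cat.{v, v}, EssentiallySmall.{v} (ObjectProperty.FullSubcategory (PhiClosure Φ
    (fun F : Cᵒᵖ ⥤ Type v => ∃ c : C, Nonempty (F ≅ yoneda.obj c))))

/-- The soundness condition on a class of weights: for every small `Φ`-complete `D` and every
`Φ`-continuous `ψ : D ⥤ Type v`, the weighted-colimit functor `ψ * (-) : [Dᵒᵖ, Type v] ⥤ Type v`
(i.e. the small-colimit-preserving extension of `ψ` along the Yoneda embedding) is
`Φ`-continuous. -/
def SoundnessCondition (Φ : WeightClass.{v}) : Prop :=
  ∀ D : Cat.{v, v}, PhiComplete Φ D → ∀ ψ : D ⥤ Type v, PhiContinuous Φ ψ →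
    ∀ T : (Dᵒᵖ ⥤ Type v) ⥤ Type v, PreservesColimitsOfSize.{v, v} T →
      Nonempty ((yoneda : D ⥤ _) ⋙ T ≅ ψ) → PhiContinuous Φ T

/-- `φ` belongs to the saturation of `Φ` if it lies in the closure of the representables
under `Φ`-weighted colimits in the presheaf category over its domain. -/
def InSaturation (Φ : WeightClass.{v}) (C : Cat.{v, v}) (φ : C ⥤ Type v) : Prop :=
  PhiClosure Φ (fun F : C ⥤ Type v => ∃ c : Cᵒᵖ, Nonempty (F ≅ coyoneda.obj c)) φ

/-- A category `J` is `α`-filtered when every diagram with fewer than `α` arrows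
admits a cocone. -/
def IsCardinalFiltered (J : Type u) [Category.{v'} J] (α : Cardinal.{v}) : Prop :=
  ∀ D : Cat.{v, v}, Cardinal.mk (Arrow D) < α → ∀ F : D ⥤ J, Nonempty (Cocone F)

/-- An object `X` is `α`-presentable when its hom-functor preserves `α`-filtered colimits. -/
def IsPresentableObj {K : Type u} [Category.{v} K] (α : Cardinal.{v}) (X : K) : Prop :=
  ∀ J : Cat.{v, v}, IsCardinalFiltered J α →
    PreservesColimitsOfShape J (coyoneda.obj (op X))

/-- `K` is locally `α`-presentable: it is cocomplete and has a small full subcategory of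
`α`-presentable objects such that every object is an `α`-filtered colimit of objects
from it. -/
def IsLocallyPresentableAt (K : Type u) [Category.{v} K] (α : Cardinal.{v}) : Prop :=
  HasColimitsOfSize.{v, v} K ∧ α.IsRegular ∧
    ∃ P : K → Prop, Small.{v} (Subtype P) ∧ (∀ X, P X → IsPresentableObj α X) ∧
      ∀ X : K, ∃ J : Cat.{v, v}, IsCardinalFiltered J α ∧
        ∃ (F : J ⥤ K) (c : Cocone F),
          (∀ j, P (F.obj j)) ∧ c.pt = X ∧ Nonempty (IsColimit c)

/-- `K` is locally presentable. -/
def IsLocallyPresentable (K : Type u) [Category.{v} K] : Prop :=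
  ∃ α : Cardinal.{v}, IsLocallyPresentableAt K α

/-- `PF : PK ⥤ PL` is the (essentially unique) functor sending a small presheaf `X` to the
left Kan extension of `X` along `Fᵒᵖ`. -/
def IsPshExtensionOf {K : Type u} {L : Type u'} [Category.{v} K] [Category.{v} L]
    (F : K ⥤ L) (PF : SmallPresheaf K ⥤ SmallPresheaf L) : Prop :=
  ∃ ε : ObjectProperty.ι (fun X : Kᵒᵖ ⥤ Type v => IsSmallFunctor.{v} X) ⟶
      PF ⋙ ObjectProperty.ι (fun X : Lᵒᵖ ⥤ Type v => IsSmallFunctor.{v} X) ⋙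
        (Functor.whiskeringLeft Kᵒᵖ Lᵒᵖ (Type v)).obj F.op,
    ∀ X : SmallPresheaf K, Functor.IsLeftKanExtension ((PF.obj X).obj) (ε.app X)

open MonoidalCategory in
/-- `D` is the Day convolution `∫^{A,B} K(-, A ⊗ B) × F A × G B` of the presheaves
`F` and `G`: it carries a universal wedge. -/
def IsDayConvolution {K : Type u} [Category.{v} K] [MonoidalCategory K]
    (F G D : Kᵒᵖ ⥤ Type v) : Prop :=
  ∃ u : ∀ A B : K, F.obj (op A) → G.obj (op B) → D.obj (op (A ⊗ B)),
    (∀ (A A' B B' : K) (f : A' ⟶ A) (g : B' ⟶ B) (x : F.obj (op A)) (y : G.obj (op B)),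
      u A' B' (F.map f.op x) (G.map g.op y)
        = D.map (MonoidalCategory.tensorHom f g).op (u A B x y)) ∧
    ∀ (H : Kᵒᵖ ⥤ Type v)
      (p : ∀ A B : K, F.obj (op A) → G.obj (op B) → H.obj (op (A ⊗ B))),
      (∀ (A A' B B' : K) (f : A' ⟶ A) (g : B' ⟶ B) (x : F.obj (op A)) (y : G.obj (op B)),
        p A' B' (F.map f.op x) (G.map g.op y)
          = H.map (MonoidalCategory.tensorHom f g).op (p A B x y)) →
      ∃! τ : D ⟶ H, ∀ (A B : K) (x : F.obj (op A)) (y : G.obj (op B)),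
        τ.app (op (A ⊗ B)) (u A B x y) = p A B x y

/-- The restricted Yoneda embedding of `M` into presheaves on the full subcategory of
`β`-presentable objects. -/
def restrictedYoneda (M : Type u) [Category.{v} M] (β : Cardinal.{v}) :
    M ⥤ ((ObjectProperty.FullSubcategory (IsPresentableObj β : M → Prop))ᵒᵖ ⥤ Type v) :=
  yoneda ⋙ (Functor.whiskeringLeft _ _ _).obj (ObjectProperty.ι _).op

/-! Into a category with small colimits, the left Kan extension of a functor's restriction to a
small full subcategory is computed pointwise, so `S` is small iff it is the pointwise left Kan
extension from some small `P`. Evaluation functors preserve these colimits and jointly reflect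
them, which gives the forward direction and reduces the converse to finding one small `P` that
works for every `c`. Take the union of the subcategories `P c` witnessing smallness of the
`ev_c ∘ S`: a pointwise left Kan extension from `Q` is also one from any larger `P`, because every
object of `P` is itself a colimit of objects of `Q`. -/

universe v'' u''

namespace CategoryTheory.ObjectProperty

variable {K : Type u} [Category.{v} K] {H : Type u'} [Category.{v'} H]

abbrev restrictionLeftExtension (P : ObjectProperty K) (F : K ⥤ H) :
    P.ι.LeftExtension (P.ι ⋙ F) :=
  Functor.LeftExtension.mk F (𝟙 (P.ι ⋙ F))

lemma restrictionLeftExtension_coconeAt_ι_app (P : ObjectProperty K) (F : K ⥤ H) (k : K)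
    (g : CostructuredArrow P.ι k) :
    ((P.restrictionLeftExtension F).coconeAt k).ι.app g = F.map g.hom :=
  Category.id_comp (F.map g.hom)

instance hasColimitsOfShape_costructuredArrow_ι (P : ObjectProperty K)
    [ObjectProperty.Small.{v} P] [HasColimitsOfSize.{v, v} H] (k : K) :
    HasColimitsOfShape (CostructuredArrow P.ι k) H :=
  have : EssentiallySmall.{v} (CostructuredArrow P.ι k) :=
    essentiallySmall_of_small_of_locallySmall _
  hasColimitsOfShape_of_essentiallySmall (CostructuredArrow P.ι k) H

lemma nonempty_isPointwiseLeftKanExtension_iff (P : ObjectProperty K)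
    [ObjectProperty.Small.{v} P] [HasColimitsOfSize.{v, v} H] (F : K ⥤ H) :
    Nonempty (P.restrictionLeftExtension F).IsPointwiseLeftKanExtension ↔
      F.IsLeftKanExtension (𝟙 (P.ι ⋙ F)) :=
  ⟨fun ⟨h⟩ => h.isLeftKanExtension,
    fun _ => ⟨Functor.isPointwiseLeftKanExtensionOfIsLeftKanExtension F (𝟙 (P.ι ⋙ F))⟩⟩

noncomputable def isPointwiseLeftKanExtensionOfLE {P Q : ObjectProperty K} (hQP : Q ≤ P)
    {F : K ⥤ H} (hQ : (Q.restrictionLeftExtension F).IsPointwiseLeftKanExtension) :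
    (P.restrictionLeftExtension F).IsPointwiseLeftKanExtension := fun k =>
  let j := CostructuredArrow.pre (ιOfLE hQP) P.ι k
  { desc s := (hQ k).desc (s.whisker j)
    -- `F p` is itself a colimit over the arrows into `p` from `Q`, so test against that cocone
    fac s g := (hQ g.left.obj).hom_ext fun h => by
      have hdesc := (hQ k).fac (s.whisker j) (CostructuredArrow.mk (h.hom ≫ g.hom))
      have hs := s.w (CostructuredArrow.homMk (homMk h.hom) :
        j.obj (CostructuredArrow.mk (h.hom ≫ g.hom)) ⟶ g)
      simp only [restrictionLeftExtension_coconeAt_ι_app, CostructuredArrow.mk_hom_eq_self,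
        Functor.map_comp] at hdesc ⊢
      exact (Category.assoc _ _ _).symm.trans (hdesc.trans hs.symm)
    uniq s m hm := (hQ k).hom_ext fun h => by
      have hdesc := (hQ k).fac (s.whisker j) h
      have hmh := hm (j.obj h)
      simp only [restrictionLeftExtension_coconeAt_ι_app] at hdesc hmh ⊢
      exact hmh.trans hdesc.symm }

noncomputable def isPointwiseLeftKanExtensionComp
    {P : ObjectProperty K} {F : K ⥤ H} {H' : Type u''} [Category.{v''} H'] (G : H ⥤ H')
    [∀ k, PreservesColimitsOfShape (CostructuredArrow P.ι k) G]
    (h : (P.restrictionLeftExtension F).IsPointwiseLeftKanExtension) :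
    (P.restrictionLeftExtension (F ⋙ G)).IsPointwiseLeftKanExtension := fun k =>
  (isColimitOfPreserves G (h k)).ofIsoColimit <| Cocone.ext (Iso.refl _) fun g =>
    (Category.comp_id _).trans <|
      (congrArg G.map (restrictionLeftExtension_coconeAt_ι_app P F k g)).trans
        (restrictionLeftExtension_coconeAt_ι_app P (F ⋙ G) k g).symm

noncomputable def isPointwiseLeftKanExtensionOfEvaluation {P : ObjectProperty K}
    {C : Type u''} [Category.{v''} C] {F : K ⥤ C ⥤ H}
    (h : ∀ c, Functor.LeftExtension.IsPointwiseLeftKanExtension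
      (P.restrictionLeftExtension (F ⋙ (evaluation C H).obj c))) :
    (P.restrictionLeftExtension F).IsPointwiseLeftKanExtension := fun k =>
  evaluationJointlyReflectsColimits _ fun c => (h c k).ofIsoColimit <|
    Cocone.ext (Iso.refl _) fun g => (Category.comp_id _).trans <|
      (restrictionLeftExtension_coconeAt_ι_app P _ k g).trans
        (congrArg (fun f => f.app c) (restrictionLeftExtension_coconeAt_ι_app P F k g)).symm

end CategoryTheory.ObjectProperty

open ObjectProperty in
lemma isSmallFunctor_iff_exists_isPointwiseLeftKanExtension {K : Type u} [Category.{v} K]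
    {H : Type u'} [Category.{v'} H] [HasColimitsOfSize.{v, v} H] (F : K ⥤ H) :
    IsSmallFunctor.{v} F ↔ ∃ P : ObjectProperty K, ObjectProperty.Small.{v} P ∧
      Nonempty (P.restrictionLeftExtension F).IsPointwiseLeftKanExtension :=
  exists_congr fun P => and_congr_right fun _ =>
    (nonempty_isPointwiseLeftKanExtension_iff P F).symm

/-- A functor `S : K ⥤ [C, Set]` into a functor category (with `C` small)
is small if and only if it is pointwise small, i.e. each composite with an evaluation
functor is small. -/
theorem statement0 {K : Type u} [Category.{v} K] {C : Type v} [SmallCategory C]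
    (S : K ⥤ C ⥤ Type v) :
    IsSmallFunctor.{v} S ↔
      ∀ c : C, IsSmallFunctor.{v} (S ⋙ (evaluation C (Type v)).obj c) := by
  simp only [isSmallFunctor_iff_exists_isPointwiseLeftKanExtension]
  constructor
  · rintro ⟨P, hP, ⟨hS⟩⟩ c
    refine ⟨P, hP, ⟨?_⟩⟩
    exact ObjectProperty.isPointwiseLeftKanExtensionComp ((evaluation C (Type v)).obj c) hS
  · intro h
    choose P hP hS using h
    refine ⟨⨆ c, P c, inferInstance, ⟨?_⟩⟩
    exact ObjectProperty.isPointwiseLeftKanExtensionOfEvaluation fun c =>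
      ObjectProperty.isPointwiseLeftKanExtensionOfLE (le_iSup P c) (hS c).some
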